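/- arXiv:2405.15167 — 3 statements merged into one kernel-verified Lean document; each statement's English description precedes it below -/
import Mathlib

section
/- Let v ∈ ℝ^n and λ > 0 with ‖v‖₁ > λ. Sort the absolute values so that |v_{(1)}| ≥ |v_{(2)}| ≥ ⋯ ≥ |v_{(n)}|, let j* = max{ j : |v_{(j)}| > (Σ_{k=1}^{j} |v_{(k)}| − λ)/j }, and set θ = (Σ_{k=1}^{j*} |v_{(k)}| − λ)/j*. Then the vector w with w_i = sign(v_i)·max(|v_i| − θ, 0) is the unique solution to min_{‖w‖₁ ≤ λ} ½‖v − w‖₂², and satisfies ‖w‖₁ = λ. -/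
/-!
With `a` the sorted absolute values and `θ_j = (a_0 + ⋯ + a_j - λ)/(j + 1)`, the value `θ_{j+1}`
is a weighted mean of `θ_j` and `a_{j+1}`; so once `a_{j+1} ≤ θ_{j+1}`, both `a_{j+1}` and
`θ_{j+1}` lie below `θ_j`. Inductively every `a_k` past `j*` is at most `θ = θ_{j*}`, while
monotonicity puts every earlier `a_k` above `θ`. Hence `∑ max (a_k - θ) 0 = λ`, which also
forces `θ ≥ 0` because `‖v‖₁ > λ`.

For `θ ≥ 0` the soft-thresholded `w` satisfies `(v_i - w_i)(u_i - w_i) ≤ θ (|u_i| - |w_i|)`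
coordinatewise. Summing and using `‖w‖₁ = λ ≥ ‖u‖₁` gives `⟪v - w, u - w⟫ ≤ 0`, hence
`‖v - u‖² ≥ ‖v - w‖² + ‖u - w‖²`: optimality and uniqueness at once.
-/

open Finset

noncomputable def softThreshold (θ x : ℝ) : ℝ := Real.sign x * max (|x| - θ) 0

section SoftThreshold

variable {θ : ℝ}

theorem softThreshold_of_abs_le {x : ℝ} (hx : |x| ≤ θ) : softThreshold θ x = 0 := by
  simp [softThreshold, max_eq_right (sub_nonpos.mpr hx)]

theorem abs_softThreshold (hθ : 0 ≤ θ) (x : ℝ) : |softThreshold θ x| = max (|x| - θ) 0 := by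
  rcases lt_trichotomy x 0 with hx | rfl | hx
  · simp [softThreshold, Real.sign_of_neg hx, abs_of_nonneg]
  · simp [softThreshold, hθ]
  · simp [softThreshold, Real.sign_of_pos hx, abs_of_nonneg]

/-- The optimality condition of `s ↦ ½ (x - s)² + θ |s|` at its minimiser `softThreshold θ x`. -/
theorem softThreshold_variational (hθ : 0 ≤ θ) (x u : ℝ) :
    (x - softThreshold θ x) * (u - softThreshold θ x) ≤ θ * (|u| - |softThreshold θ x|) := by
  rcases le_or_gt |x| θ with hx | hx
  · rw [softThreshold_of_abs_le hx, abs_zero]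
    calc (x - 0) * (u - 0) ≤ |x| * |u| := by rw [← abs_mul]; simpa using le_abs_self (x * u)
      _ ≤ θ * (|u| - 0) := by rw [sub_zero]; exact mul_le_mul_of_nonneg_right hx (abs_nonneg u)
  · rcases lt_trichotomy x 0 with hneg | rfl | hpos
    · rw [abs_of_neg hneg] at hx
      have hs : softThreshold θ x = x + θ := by
        rw [softThreshold, Real.sign_of_neg hneg, abs_of_neg hneg, max_eq_left (by linarith)]
        ring
      rw [hs, abs_of_neg (by linarith : x + θ < 0)]
      nlinarith [neg_le_abs u]
    · simp only [abs_zero] at hx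
      linarith
    · rw [abs_of_pos hpos] at hx
      have hs : softThreshold θ x = x - θ := by
        rw [softThreshold, Real.sign_of_pos hpos, abs_of_pos hpos, max_eq_left (by linarith)]
        ring
      rw [hs, abs_of_pos (by linarith : 0 < x - θ)]
      nlinarith [le_abs_self u]

end SoftThreshold

section Projection

variable {ι : Type*} [Fintype ι]

theorem sum_sq_sub_add_sum_sq_sub_le {v w u : ι → ℝ}
    (h : ∑ i, (v i - w i) * (u i - w i) ≤ 0) :
    ∑ i, (v i - w i) ^ 2 + ∑ i, (u i - w i) ^ 2 ≤ ∑ i, (v i - u i) ^ 2 := by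
  have hexpand : ∑ i, (v i - u i) ^ 2
      = ∑ i, (v i - w i) ^ 2 - 2 * ∑ i, (v i - w i) * (u i - w i) + ∑ i, (u i - w i) ^ 2 := by
    rw [mul_sum, ← sum_sub_distrib, ← sum_add_distrib]
    exact sum_congr rfl fun i _ => by ring
  linarith

theorem sum_sub_softThreshold_mul_nonpos {θ lam : ℝ} (hθ : 0 ≤ θ) {v u : ι → ℝ}
    (hw : ∑ i, |softThreshold θ (v i)| = lam) (hu : ∑ i, |u i| ≤ lam) :
    ∑ i, (v i - softThreshold θ (v i)) * (u i - softThreshold θ (v i)) ≤ 0 :=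
  calc ∑ i, (v i - softThreshold θ (v i)) * (u i - softThreshold θ (v i))
      ≤ ∑ i, θ * (|u i| - |softThreshold θ (v i)|) :=
        sum_le_sum fun i _ => softThreshold_variational hθ (v i) (u i)
    _ = θ * (∑ i, |u i| - lam) := by rw [← mul_sum, sum_sub_distrib, hw]
    _ ≤ 0 := mul_nonpos_of_nonneg_of_nonpos hθ (by linarith)

end Projection

noncomputable def partialThreshold {n : ℕ} (a : Fin n → ℝ) (lam : ℝ) (j : Fin n) : ℝ :=
  ((∑ k ∈ Iic j, a k) - lam) / ((j : ℝ) + 1)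

theorem Fin.sum_Iic_of_val_eq_succ {M : Type*} [AddCommMonoid M] {n : ℕ} (f : Fin n → M)
    {j k : Fin n} (hjk : k.val = j.val + 1) :
    ∑ i ∈ Iic k, f i = ∑ i ∈ Iic j, f i + f k := by
  have hIic : Iic k = insert k (Iic j) := by
    ext i
    simp only [mem_Iic, mem_insert, Fin.le_def, Fin.ext_iff]
    omega
  rw [hIic, sum_insert (by simp [Fin.le_def, hjk]), add_comm]

theorem le_of_le_weighted_mean {c x y : ℝ} (hc : 0 < c) (h : y ≤ (c * x + y) / (c + 1)) :
    y ≤ x ∧ (c * x + y) / (c + 1) ≤ x := by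
  rw [le_div_iff₀ (by linarith)] at h
  have hyx : y ≤ x := le_of_mul_le_mul_left (by linarith) hc
  exact ⟨hyx, (div_le_iff₀ (by linarith)).mpr (by linarith)⟩

section PartialThreshold

variable {n : ℕ} {a : Fin n → ℝ} {lam : ℝ}

theorem partialThreshold_of_val_eq_succ {j k : Fin n} (hjk : k.val = j.val + 1) :
    partialThreshold a lam k
      = (((j : ℝ) + 1) * partialThreshold a lam j + a k) / (((j : ℝ) + 1) + 1) := by
  have hj : (j : ℝ) + 1 ≠ 0 := by positivity
  rw [partialThreshold, partialThreshold, Fin.sum_Iic_of_val_eq_succ a hjk, hjk,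
    mul_div_cancel₀ _ hj]
  push_cast
  ring_nf

theorem le_partialThreshold_of_val_eq_succ {j k : Fin n} (hjk : k.val = j.val + 1)
    (hk : a k ≤ partialThreshold a lam k) :
    a k ≤ partialThreshold a lam j ∧ partialThreshold a lam k ≤ partialThreshold a lam j := by
  rw [partialThreshold_of_val_eq_succ hjk] at hk ⊢
  exact le_of_le_weighted_mean (by positivity) hk

variable {jmax : Fin n}

theorem le_partialThreshold_of_isGreatest_of_lt
    (hjmax : IsGreatest {j : Fin n | partialThreshold a lam j < a j} jmax) {k : Fin n}
    (hk : jmax < k) : a k ≤ partialThreshold a lam k :=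
  not_lt.mp fun hlt => (hjmax.2 hlt).not_gt hk

theorem partialThreshold_le_of_isGreatest
    (hjmax : IsGreatest {j : Fin n | partialThreshold a lam j < a j} jmax) {k : Fin n}
    (hk : jmax ≤ k) : partialThreshold a lam k ≤ partialThreshold a lam jmax := by
  obtain ⟨m, hm⟩ := k
  induction m, (show jmax.val ≤ m from hk) using Nat.le_induction with
  | base => rfl
  | succ m hjm ih =>
    have hprev : jmax ≤ ⟨m, by omega⟩ := hjm
    have hlast := le_partialThreshold_of_isGreatest_of_lt hjmax
      (show jmax < ⟨m + 1, hm⟩ from Nat.lt_succ_of_le hjm)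
    exact (le_partialThreshold_of_val_eq_succ (j := ⟨m, by omega⟩) rfl hlast).2.trans
      (ih (by omega) hprev)

theorem le_partialThreshold_of_isGreatest
    (hjmax : IsGreatest {j : Fin n | partialThreshold a lam j < a j} jmax) {k : Fin n}
    (hk : jmax < k) : a k ≤ partialThreshold a lam jmax := by
  have hprev : jmax ≤ ⟨k.val - 1, by omega⟩ := Fin.le_def.mpr (by dsimp only; omega)
  exact (le_partialThreshold_of_val_eq_succ (j := ⟨k.val - 1, by omega⟩) (by dsimp only; omega)
    (le_partialThreshold_of_isGreatest_of_lt hjmax hk)).1.trans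
    (partialThreshold_le_of_isGreatest hjmax hprev)

theorem sum_max_sub_partialThreshold_eq (ha : Antitone a)
    (hjmax : IsGreatest {j : Fin n | partialThreshold a lam j < a j} jmax) :
    ∑ k, max (a k - partialThreshold a lam jmax) 0 = lam := by
  set θ := partialThreshold a lam jmax with hθ
  have hhead : ∀ k ∈ Iic jmax, max (a k - θ) 0 = a k - θ := fun k hk =>
    max_eq_left (sub_nonneg.mpr (hjmax.1.le.trans (ha (mem_Iic.mp hk))))
  have htail : ∀ k ∈ univ, k ∉ Iic jmax → max (a k - θ) 0 = 0 := fun k _ hk =>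
    max_eq_right (sub_nonpos.mpr
      (le_partialThreshold_of_isGreatest hjmax (not_le.mp (mt mem_Iic.mpr hk))))
  have hj : (jmax : ℝ) + 1 ≠ 0 := by positivity
  rw [← sum_subset (subset_univ _) htail, sum_congr rfl hhead, sum_sub_distrib, sum_const,
    Fin.card_Iic, nsmul_eq_mul, hθ, partialThreshold]
  push_cast
  field_simp
  ring

end PartialThreshold

theorem stmt_5_general (n : ℕ) (v : Fin n → ℝ) (lam : ℝ)
    (hv : lam < ∑ i, |v i|)
    (σ : Equiv.Perm (Fin n))
    (hσ : ∀ a b : Fin n, a ≤ b → |v (σ b)| ≤ |v (σ a)|)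
    (jmax : Fin n)
    (hjmax : IsGreatest {j : Fin n |
      ((∑ k ∈ Iic j, |v (σ k)|) - lam) / ((j : ℝ) + 1) < |v (σ j)|} jmax)
    (θ : ℝ)
    (hθ : θ = ((∑ k ∈ Iic jmax, |v (σ k)|) - lam) / ((jmax : ℝ) + 1))
    (w : Fin n → ℝ)
    (hw : ∀ i, w i = Real.sign (v i) * max (|v i| - θ) 0) :
    (∑ i, |w i|) = lam ∧
    (∀ u : Fin n → ℝ, (∑ i, |u i|) ≤ lam →
      (1 / 2) * (∑ i, (v i - w i) ^ 2) ≤ (1 / 2) * (∑ i, (v i - u i) ^ 2)) ∧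
    (∀ u : Fin n → ℝ, (∑ i, |u i|) ≤ lam →
      (∑ i, (v i - u i) ^ 2) = (∑ i, (v i - w i) ^ 2) → u = w) := by
  obtain rfl : w = fun i => softThreshold θ (v i) := funext hw
  have hsum : ∑ i, max (|v i| - θ) 0 = lam := by
    rw [← Equiv.sum_comp σ, hθ]
    exact sum_max_sub_partialThreshold_eq hσ hjmax
  have hθ0 : 0 ≤ θ := by
    by_contra! hneg
    have : ∑ i, |v i| ≤ lam :=
      hsum ▸ sum_le_sum fun i _ => (by linarith : |v i| ≤ |v i| - θ).trans (le_max_left _ _)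
    linarith
  have hnorm : ∑ i, |softThreshold θ (v i)| = lam := by
    simp_rw [abs_softThreshold hθ0]
    exact hsum
  have hopt : ∀ u : Fin n → ℝ, ∑ i, |u i| ≤ lam →
      ∑ i, (v i - softThreshold θ (v i)) ^ 2 + ∑ i, (u i - softThreshold θ (v i)) ^ 2
        ≤ ∑ i, (v i - u i) ^ 2 := fun u hu =>
    sum_sq_sub_add_sum_sq_sub_le (sum_sub_softThreshold_mul_nonpos hθ0 hnorm hu)
  refine ⟨hnorm, fun u hu => ?_, fun u hu heq => ?_⟩
  · linarith [hopt u hu,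
      sum_nonneg fun i (_ : i ∈ univ) => sq_nonneg (u i - softThreshold θ (v i))]
  · have hzero : ∑ i, (u i - softThreshold θ (v i)) ^ 2 = 0 :=
      le_antisymm (by linarith [hopt u hu]) (sum_nonneg fun i _ => sq_nonneg _)
    funext i
    rw [sum_eq_zero_iff_of_nonneg fun i _ => sq_nonneg _] at hzero
    exact sub_eq_zero.mp (pow_eq_zero_iff two_ne_zero |>.mp (hzero i (mem_univ i)))

/-- Duchi et al. (2008) soft-thresholding characterization of the Euclidean
projection onto the ℓ1 ball: with `σ` sorting the absolute values of `v` in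
decreasing order, `jmax` the largest (0-based) index `j` with
`|v (σ j)| > (∑_{k ≤ j} |v (σ k)| − λ)/(j+1)`, and
`θ = (∑_{k ≤ jmax} |v (σ k)| − λ)/(jmax+1)`, the soft-thresholded vector
`w i = sign(v i) · max(|v i| − θ, 0)` is the unique solution of
`min_{‖w‖₁ ≤ λ} ½‖v − w‖₂²` and satisfies `‖w‖₁ = λ`. -/
theorem stmt_5 (n : ℕ) (v : Fin n → ℝ) (lam : ℝ) (hlam : 0 < lam)
    (hv : lam < ∑ i, |v i|)
    (σ : Equiv.Perm (Fin n))
    (hσ : ∀ a b : Fin n, a ≤ b → |v (σ b)| ≤ |v (σ a)|)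
    (jmax : Fin n)
    (hjmax : IsGreatest {j : Fin n |
      ((∑ k ∈ Iic j, |v (σ k)|) - lam) / ((j : ℝ) + 1) < |v (σ j)|} jmax)
    (θ : ℝ)
    (hθ : θ = ((∑ k ∈ Iic jmax, |v (σ k)|) - lam) / ((jmax : ℝ) + 1))
    (w : Fin n → ℝ)
    (hw : ∀ i, w i = Real.sign (v i) * max (|v i| - θ) 0) :
    (∑ i, |w i|) = lam ∧
    (∀ u : Fin n → ℝ, (∑ i, |u i|) ≤ lam →
      (1 / 2) * (∑ i, (v i - w i) ^ 2) ≤ (1 / 2) * (∑ i, (v i - u i) ^ 2)) ∧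
    (∀ u : Fin n → ℝ, (∑ i, |u i|) ≤ lam →
      (∑ i, (v i - u i) ^ 2) = (∑ i, (v i - w i) ^ 2) → u = w) :=
  stmt_5_general n v lam hv σ hσ jmax hjmax θ hθ w hw
end

section
/- For matrices W ∈ ℝ^{p×p} with ρ(W ∘ W) < 1, the function h(W) = −log det(I − W ∘ W) satisfies h(W) = 0 if and only if the directed graph with edges {(j,k) : w_{jk} ≠ 0} is acyclic. -/
/-!
Write `A = W ∘ W`, an entrywise nonnegative matrix. Since `det p(A) = ∏ p(λ)` over the
eigenvalues of `A` (with multiplicity), `tr (A ^ m) = ∑ λ ^ m` and `det (1 - A) = ∏ (1 - λ)`;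
when every `|λ| < 1`, summing the Taylor series of `-log (1 - λ)` gives
`-log det (1 - A) = ∑_{m ≥ 1} tr (A ^ m) / m`. Every term is nonnegative, and `tr (A ^ m) > 0`
exactly when the support graph of `A`, which is that of `W`, has a closed walk of length `m`
(the diagonal of `A ^ m` dominates the weight of any closed walk and vanishes without one).
Hence `h(W) = 0` iff all these traces vanish iff the graph is acyclic.
-/

open Matrix Polynomial

namespace Matrix

variable {n : Type*} [Fintype n] [DecidableEq n]

section Spectral

variable {K : Type*} [Field K] [IsAlgClosed K]

theorem card_roots_charpoly (B : Matrix n n K) :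
    Multiset.card B.charpoly.roots = Fintype.card n := by
  rw [splits_iff_card_roots.mp (IsAlgClosed.splits _), charpoly_natDegree_eq_dim]

theorem det_sub_scalar_eq_prod_roots_charpoly (B : Matrix n n K) (r : K) :
    (B - scalar n r).det = (B.charpoly.roots.map fun a => a - r).prod := by
  have h := (IsAlgClosed.splits B.charpoly).eval_eq_prod_roots r
  rw [eval_charpoly, B.charpoly_monic.leadingCoeff, one_mul] at h
  rw [← neg_sub, det_neg, h, ← card_roots_charpoly B, ← Multiset.card_map (r - ·),
    ← Multiset.prod_map_neg, Multiset.map_map]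
  simp only [Function.comp_def, neg_sub]

theorem det_aeval_eq_prod_roots_charpoly (B : Matrix n n K) (q : K[X]) :
    (aeval B q).det = (B.charpoly.roots.map q.eval).prod := by
  let φ : K[X] →* K := detMonoidHom.comp (aeval B : K[X] →ₐ[K] Matrix n n K).toMonoidHom
  have hφ : ∀ p, φ p = (aeval B p).det := fun _ => rfl
  have hq := (IsAlgClosed.splits q).eq_prod_roots
  calc (aeval B q).det = φ q := rfl
    _ = q.leadingCoeff ^ Fintype.card n *
          (q.roots.map fun r => (B.charpoly.roots.map fun a => a - r).prod).prod := by
      conv_lhs => rw [hq]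
      rw [map_mul, map_multiset_prod, Multiset.map_map, hφ, aeval_C]
      simp only [Function.comp_def, hφ, map_sub, aeval_X, aeval_C,
        ← det_sub_scalar_eq_prod_roots_charpoly]
      simp [algebraMap_eq_diagonal, scalar_apply, Pi.algebraMap_def]
    _ = (B.charpoly.roots.map fun a => q.leadingCoeff * (q.roots.map (a - ·)).prod).prod := by
      rw [Multiset.prod_map_mul, Multiset.map_const', Multiset.prod_replicate,
        card_roots_charpoly, Multiset.prod_map_prod_map]
    _ = (B.charpoly.roots.map q.eval).prod := by
      simp only [(IsAlgClosed.splits q).eval_eq_prod_roots]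

theorem roots_charpoly_aeval (B : Matrix n n K) (q : K[X]) :
    (aeval B q).charpoly.roots = B.charpoly.roots.map q.eval := by
  suffices (aeval B q).charpoly = ((B.charpoly.roots.map q.eval).map (X - C ·)).prod by
    rw [this, roots_multiset_prod_X_sub_C]
  refine Polynomial.funext fun x => ?_
  have : scalar n x - aeval B q = aeval B (C x - q) := by
    simp [algebraMap_eq_diagonal, scalar_apply, Pi.algebraMap_def]
  rw [eval_charpoly, this, det_aeval_eq_prod_roots_charpoly, eval_multiset_prod]
  simp

theorem trace_pow_eq_sum_roots_charpoly (B : Matrix n n K) (m : ℕ) :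
    (B ^ m).trace = (B.charpoly.roots.map (· ^ m)).sum := by
  simpa [trace_eq_sum_roots_charpoly] using congrArg Multiset.sum (roots_charpoly_aeval B (X ^ m))

theorem det_one_sub_eq_prod_roots_charpoly (B : Matrix n n K) :
    (1 - B).det = (B.charpoly.roots.map (1 - ·)).prod := by
  convert det_aeval_eq_prod_roots_charpoly B (1 - X) using 2 <;> simp

end Spectral

-- Both series include an `m = 0` term, which is `x / 0 = 0`.
theorem hasSum_trace_pow_div (B : Matrix n n ℂ) (hB : ∀ a ∈ B.charpoly.roots, ‖a‖ < 1) :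
    HasSum (fun m : ℕ => (B ^ m).trace / m)
      (-(B.charpoly.roots.map fun a => Complex.log (1 - a)).sum) := by
  simp only [trace_pow_eq_sum_roots_charpoly, ← Multiset.sum_map_div]
  generalize B.charpoly.roots = s at hB ⊢
  induction s using Multiset.induction_on with
  | empty => simp [hasSum_zero]
  | cons a s ih =>
    simp only [Multiset.map_cons, Multiset.sum_cons, neg_add]
    exact (Complex.hasSum_taylorSeries_neg_log (hB a (s.mem_cons_self a))).add
      (ih fun b hb => hB b (Multiset.mem_cons_of_mem hb))

theorem exp_sum_log_one_sub_roots_charpoly (B : Matrix n n ℂ) (h1 : 1 ∉ B.charpoly.roots) :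
    Complex.exp (B.charpoly.roots.map fun a => Complex.log (1 - a)).sum = (1 - B).det := by
  rw [det_one_sub_eq_prod_roots_charpoly, Complex.exp_multiset_sum, Multiset.map_map]
  refine congrArg _ (Multiset.map_congr rfl fun a ha => ?_)
  exact Complex.exp_log (sub_ne_zero.mpr (ne_of_mem_of_not_mem ha h1).symm)

theorem hasSum_trace_pow_div_neg_log_det (A : Matrix n n ℝ)
    (hA : ∀ μ ∈ spectrum ℂ (A.map Complex.ofReal), ‖μ‖ < 1) :
    HasSum (fun m : ℕ => (A ^ m).trace / m) (-Real.log (1 - A).det) := by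
  set B := A.map Complex.ofReal
  have hroots : ∀ a ∈ B.charpoly.roots, ‖a‖ < 1 := fun a ha =>
    hA a (mem_spectrum_iff_isRoot_charpoly.mpr (isRoot_of_mem_roots ha))
  have hdet : ((1 - A).det : ℂ) = (1 - B).det := by
    rw [← Complex.ofRealHom_eq_coe, RingHom.map_det]
    congr 1
    ext i j
    simp [B, one_apply, apply_ite]
  -- `Real.log` only sees `|det (1 - A)|`, so the sign of the determinant never matters.
  have hlog :
      (B.charpoly.roots.map fun a => Complex.log (1 - a)).sum.re = Real.log (1 - A).det := by
    rw [← Real.log_exp (Complex.re _), ← Complex.norm_exp,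
      exp_sum_log_one_sub_roots_charpoly B fun h => (hroots 1 h).ne norm_one, ← hdet,
      Complex.norm_real, Real.norm_eq_abs, Real.log_abs]
  rw [← hlog, ← Complex.neg_re]
  convert Complex.hasSum_re (hasSum_trace_pow_div B hroots) using 2 with m
  rw [show B ^ m = (A ^ m).map Complex.ofRealHom from (Matrix.map_pow A Complex.ofRealHom m).symm,
    ← AddMonoidHom.map_trace]
  simp

section Walks

variable {R : Type*}

theorem exists_walk_of_pow_apply_ne_zero [Semiring R] (M : Matrix n n R) {m : ℕ} {i j : n}
    (h : (M ^ m) i j ≠ 0) :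
    ∃ f : ℕ → n, f 0 = i ∧ f m = j ∧ ∀ k < m, M (f k) (f (k + 1)) ≠ 0 := by
  induction m generalizing j with
  | zero =>
    obtain rfl : i = j := by by_contra hij; simp [one_apply_ne hij] at h
    exact ⟨fun _ => i, rfl, rfl, by simp⟩
  | succ m ih =>
    rw [pow_succ, mul_apply] at h
    obtain ⟨k, -, hk⟩ := Finset.exists_ne_zero_of_sum_ne_zero h
    obtain ⟨f, hf0, hfm, hf⟩ := ih (left_ne_zero_of_mul hk)
    refine ⟨fun t => if t ≤ m then f t else j, by simp [hf0], by simp, fun t ht => ?_⟩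
    rcases (Nat.lt_succ_iff.mp ht).lt_or_eq with ht | rfl
    · simpa [ht.le, Nat.succ_le_of_lt ht] using hf t ht
    · simpa [hfm] using right_ne_zero_of_mul hk

variable [CommSemiring R] [PartialOrder R] {M : Matrix n n R}

theorem prod_le_pow_apply [IsOrderedRing R] (hM : ∀ i j, 0 ≤ M i j) (f : ℕ → n) (m : ℕ) :
    ∏ i ∈ Finset.range m, M (f i) (f (i + 1)) ≤ (M ^ m) (f 0) (f m) := by
  induction m with
  | zero => simp
  | succ m ih =>
    rw [Finset.prod_range_succ, pow_succ, mul_apply]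
    calc (∏ i ∈ Finset.range m, M (f i) (f (i + 1))) * M (f m) (f (m + 1))
        ≤ (M ^ m) (f 0) (f m) * M (f m) (f (m + 1)) :=
          mul_le_mul_of_nonneg_right ih (hM _ _)
      _ ≤ ∑ k, (M ^ m) (f 0) k * M k (f (m + 1)) :=
        Finset.single_le_sum (f := fun k => (M ^ m) (f 0) k * M k (f (m + 1)))
          (fun k _ => mul_nonneg (pow_apply_nonneg hM m _ _) (hM _ _)) (Finset.mem_univ (f m))

theorem trace_pow_nonneg [IsOrderedRing R] (hM : ∀ i j, 0 ≤ M i j) (m : ℕ) :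
    0 ≤ (M ^ m).trace :=
  Finset.sum_nonneg fun i _ => pow_apply_nonneg hM m i i

theorem trace_pow_eq_zero_iff [IsStrictOrderedRing R] (hM : ∀ i j, 0 ≤ M i j) (m : ℕ) :
    (M ^ m).trace = 0 ↔ ¬∃ f : ℕ → n, f m = f 0 ∧ ∀ i < m, M (f i) (f (i + 1)) ≠ 0 := by
  constructor
  · rintro htr ⟨f, hcyc, hf⟩
    have hprod : 0 < ∏ i ∈ Finset.range m, M (f i) (f (i + 1)) :=
      Finset.prod_pos fun i hi => (hM _ _).lt_of_ne' (hf i (Finset.mem_range.mp hi))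
    have hdiag : (M ^ m) (f 0) (f 0) ≤ (M ^ m).trace :=
      Finset.single_le_sum (fun i _ => pow_apply_nonneg hM m i i) (Finset.mem_univ (f 0))
    have := prod_le_pow_apply hM f m
    rw [hcyc] at this
    exact (hprod.trans_le (this.trans hdiag)).ne' htr
  · intro hno
    by_contra htr
    obtain ⟨i, -, hi⟩ := Finset.exists_ne_zero_of_sum_ne_zero htr
    obtain ⟨f, hf0, hfm, hf⟩ := exists_walk_of_pow_apply_ne_zero M hi
    exact hno ⟨f, hfm.trans hf0.symm, hf⟩

end Walks

end Matrix

/-- DAGMA acyclicity characterization: for `W` with `ρ(W ∘ W) < 1`,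
`h(W) = −log det(I − W ∘ W) = 0` iff the directed graph with edges
`{(j,k) : w_{jk} ≠ 0}` is acyclic. -/
theorem stmt_13 (p : ℕ) (W : Matrix (Fin p) (Fin p) ℝ)
    (hρ : ∀ μ ∈ spectrum ℂ ((Matrix.hadamard W W).map (Complex.ofReal)),
      ‖μ‖ < 1) :
    -Real.log (1 - Matrix.hadamard W W).det = 0 ↔
      ¬∃ (m : ℕ) (f : ℕ → Fin p), 1 ≤ m ∧ f m = f 0 ∧
        ∀ i < m, W (f i) (f (i + 1)) ≠ 0 := by
  set A := hadamard W W
  have hA : ∀ i j, 0 ≤ A i j := fun i j => mul_self_nonneg (W i j)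
  have hsum := hasSum_trace_pow_div_neg_log_det A hρ
  have hterm : ∀ m : ℕ, 0 ≤ (A ^ m).trace / m := fun m =>
    div_nonneg (trace_pow_nonneg hA m) m.cast_nonneg
  calc -Real.log (1 - A).det = 0 ↔ HasSum (fun m : ℕ => (A ^ m).trace / m) 0 :=
        ⟨fun h => h ▸ hsum, hsum.unique⟩
    _ ↔ ∀ m : ℕ, 1 ≤ m → (A ^ m).trace = 0 := by
        rw [hasSum_zero_iff_of_nonneg hterm, funext_iff]
        refine forall_congr' fun m => ?_
        rcases m.eq_zero_or_pos with rfl | hm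
        · simp
        · simp [hm.ne', Nat.one_le_iff_ne_zero]
    _ ↔ _ := by
        simp_rw [trace_pow_eq_zero_iff hA, A, hadamard_apply, ne_eq, mul_self_eq_zero]
        simp only [not_exists, not_and]
        exact forall_congr' fun m => forall_comm
end

section
/- In the setting of ℓ1-ball projection with binding constraint, differentiating the KKT system with respect to the data w̃ (holding the active set 𝒜 and signs fixed) gives, for i, q ∈ 𝒜: ∂w*_i/∂w̃_q = 𝟙[i = q] − sign(w*_q)·sign(w*_i)/|𝒜|, and ∂w*_i/∂w̃_q = 0 whenever i ∉ 𝒜. Consequently, the |𝒜|×|𝒜| Jacobian restricted to the active set equals I − s sᵀ/|𝒜| where s ∈ {±1}^{|𝒜|} is the sign vector, which is a symmetric projection matrix (idempotent) of rank |𝒜| − 1. -/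
/-!
Summing the stationarity equations against `s` and using `sᵢ² = 1` together with the binding
constraint gives `ν(u)·|𝒜| = ∑_{i∈𝒜} sᵢ uᵢ − λ`. Hence on `𝒜` the solution `w` is an affine
function of `u` with linear part `I − s sᵀ/|𝒜|`, and off `𝒜` it is constant. Since `sᵀ s = |𝒜|`,
this matrix is the orthogonal projection onto `s^⊥`; its kernel is the line through `s`, so its
rank is `|𝒜| − 1`.
-/

open Finset Matrix

/-- The Jacobian matrix `I − s sᵀ/|𝒜|` restricted to the active set. -/
noncomputable def jacobianActive (n : ℕ) (A : Finset (Fin n)) (s : Fin n → ℝ) :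
    Matrix A A ℝ :=
  1 - (A.card : ℝ)⁻¹ • Matrix.vecMulVec (fun i : A => s i) (fun i : A => s i)

section ProjOntoOrth

variable {𝕜 ι : Type*} [Field 𝕜] [Fintype ι] [DecidableEq ι]

/-- Projection onto the dot-product orthogonal complement of `v`; it is `1` when `v ⬝ᵥ v = 0`. -/
noncomputable def projOntoOrth (v : ι → 𝕜) : Matrix ι ι 𝕜 :=
  1 - (v ⬝ᵥ v)⁻¹ • vecMulVec v v

theorem transpose_projOntoOrth (v : ι → 𝕜) : (projOntoOrth v)ᵀ = projOntoOrth v := by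
  simp [projOntoOrth, transpose_sub, transpose_smul]

theorem isIdempotentElem_projOntoOrth (v : ι → 𝕜) : IsIdempotentElem (projOntoOrth v) := by
  set c := v ⬝ᵥ v
  have hsq : vecMulVec v v * vecMulVec v v = c • vecMulVec v v := by
    rw [vecMulVec_mul_vecMulVec, vecMulVec_smul]
  have hc : c⁻¹ * c⁻¹ * c = c⁻¹ := by rw [mul_right_comm]; simpa using mul_inv_mul_cancel c⁻¹
  unfold IsIdempotentElem projOntoOrth
  rw [sub_mul, mul_sub, mul_sub, smul_mul_smul_comm, hsq, smul_smul, hc]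
  simp only [one_mul, mul_one]
  abel

theorem projOntoOrth_mulVec (v x : ι → 𝕜) :
    projOntoOrth v *ᵥ x = x - ((v ⬝ᵥ v)⁻¹ * (v ⬝ᵥ x)) • v := by
  rw [projOntoOrth, sub_mulVec, one_mulVec, smul_mulVec, vecMulVec_mulVec, op_smul_eq_smul,
    smul_smul]

theorem ker_mulVecLin_projOntoOrth {v : ι → 𝕜} (hv : v ⬝ᵥ v ≠ 0) :
    LinearMap.ker (projOntoOrth v).mulVecLin = 𝕜 ∙ v := by
  ext x
  rw [LinearMap.mem_ker, mulVecLin_apply, projOntoOrth_mulVec, sub_eq_zero,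
    Submodule.mem_span_singleton]
  constructor
  · exact fun h => ⟨_, h.symm⟩
  · rintro ⟨a, rfl⟩
    rw [dotProduct_smul, smul_eq_mul, mul_left_comm, inv_mul_cancel₀ hv, mul_one]

theorem rank_projOntoOrth {v : ι → 𝕜} (hv : v ⬝ᵥ v ≠ 0) :
    (projOntoOrth v).rank = Fintype.card ι - 1 := by
  have hv0 : v ≠ 0 := by rintro rfl; simp at hv
  have := LinearMap.finrank_range_add_finrank_ker (projOntoOrth v).mulVecLin
  rw [ker_mulVecLin_projOntoOrth hv, finrank_span_singleton hv0,
    Module.finrank_fintype_fun_eq_card] at this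
  rw [rank]
  omega

end ProjOntoOrth

section KKT

variable {ι : Type*} {A : Finset ι} {s : ι → ℝ}

theorem sum_mul_self_of_sign (hs : ∀ i ∈ A, s i = 1 ∨ s i = -1) :
    ∑ i ∈ A, s i * s i = #A := by
  rw [Finset.card_eq_sum_ones, Nat.cast_sum, Nat.cast_one]
  refine Finset.sum_congr rfl fun i hi => ?_
  rcases hs i hi with h | h <;> simp [h]

theorem dotProduct_restrict_self_of_sign (hs : ∀ i ∈ A, s i = 1 ∨ s i = -1) :
    ((fun i : A => s i) ⬝ᵥ fun i : A => s i) = #A := by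
  rw [dotProduct, Finset.sum_coe_sort A (fun i => s i * s i), sum_mul_self_of_sign hs]

theorem jacobianActive_eq_projOntoOrth {n : ℕ} {A : Finset (Fin n)} {s : Fin n → ℝ}
    (hs : ∀ i ∈ A, s i = 1 ∨ s i = -1) :
    jacobianActive n A s = projOntoOrth (fun i : A => s i) := by
  rw [jacobianActive, projOntoOrth, dotProduct_restrict_self_of_sign hs]

section Pointwise

variable {lam ν : ℝ} {u w : ι → ℝ}

theorem multiplier_mul_card (hs : ∀ i ∈ A, s i = 1 ∨ s i = -1)
    (hstat : ∀ i ∈ A, w i = u i - ν * s i) (hbind : ∑ i ∈ A, s i * w i = lam) :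
    ν * #A = ∑ i ∈ A, s i * u i - lam := by
  have : ∑ i ∈ A, s i * w i = ∑ i ∈ A, s i * u i - ν * ∑ i ∈ A, s i * s i := by
    rw [Finset.mul_sum, ← Finset.sum_sub_distrib]
    exact Finset.sum_congr rfl fun i hi => by rw [hstat i hi]; ring
  rw [← sum_mul_self_of_sign hs]
  linarith

theorem apply_eq_of_kkt (hs : ∀ i ∈ A, s i = 1 ∨ s i = -1)
    (hstat : ∀ i ∈ A, w i = u i - ν * s i) (hbind : ∑ i ∈ A, s i * w i = lam)
    {i : ι} (hi : i ∈ A) :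
    w i = u i - (∑ j ∈ A, s j * u j - lam) / #A * s i := by
  have hA : (#A : ℝ) ≠ 0 := by exact_mod_cast (Finset.card_pos.mpr ⟨i, hi⟩).ne'
  rw [hstat i hi, ← multiplier_mul_card hs hstat hbind, mul_div_cancel_right₀ _ hA]

end Pointwise

variable [DecidableEq ι]

theorem sum_mul_add_smul_single (u : ι → ℝ) (t : ℝ) {q : ι} (hq : q ∈ A) :
    ∑ j ∈ A, s j * (u + t • (Pi.single q 1 : ι → ℝ)) j = ∑ j ∈ A, s j * u j + t * s q := by
  simp [mul_add, Finset.sum_add_distrib, Pi.single_apply, hq, mul_comm]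

theorem hasDerivAt_line_of_kkt {w : (ι → ℝ) → ι → ℝ} {ν : (ι → ℝ) → ℝ}
    (hs : ∀ i ∈ A, s i = 1 ∨ s i = -1) (hstat : ∀ u, ∀ i ∈ A, w u i = u i - ν u * s i)
    (hbind : ∀ u, ∑ i ∈ A, s i * w u i = lam) (u₀ : ι → ℝ) {i q : ι} (hi : i ∈ A) (hq : q ∈ A) :
    HasDerivAt (fun t : ℝ => w (u₀ + t • (Pi.single q 1 : ι → ℝ)) i)
      ((if i = q then (1 : ℝ) else 0) - s q * s i / #A) 0 := by
  set d := (if i = q then (1 : ℝ) else 0) - s q * s i / #A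
  have hline : (fun t : ℝ => w (u₀ + t • (Pi.single q 1 : ι → ℝ)) i) =
      fun t => w u₀ i + d * t := by
    funext t
    rw [apply_eq_of_kkt hs (hstat _) (hbind _) hi, apply_eq_of_kkt hs (hstat u₀) (hbind u₀) hi,
      sum_mul_add_smul_single _ _ hq]
    simp only [d, Pi.add_apply, Pi.smul_apply, Pi.single_apply, smul_eq_mul]
    split_ifs <;> ring
  rw [hline]
  simpa using ((hasDerivAt_id (0 : ℝ)).const_mul d).const_add (w u₀ i)

end KKT

theorem stmt_17_general (n : ℕ) (A : Finset (Fin n)) (hA : A.Nonempty)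
    (s : Fin n → ℝ) (hs : ∀ i ∈ A, s i = 1 ∨ s i = -1) (lam : ℝ)
    (w : (Fin n → ℝ) → Fin n → ℝ) (ν : (Fin n → ℝ) → ℝ)
    (hstat : ∀ u : Fin n → ℝ, ∀ i ∈ A, w u i = u i - ν u * s i)
    (hzero : ∀ u : Fin n → ℝ, ∀ i ∉ A, w u i = 0)
    (hbind : ∀ u : Fin n → ℝ, (∑ i ∈ A, s i * w u i) = lam)
    (u₀ : Fin n → ℝ) :
    (∀ i ∈ A, ∀ q ∈ A,
      HasDerivAt (fun t : ℝ => w (u₀ + t • (Pi.single q 1 : Fin n → ℝ)) i)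
        ((if i = q then (1 : ℝ) else 0) - s q * s i / (A.card : ℝ)) 0) ∧
    (∀ i ∉ A, ∀ q : Fin n,
      HasDerivAt (fun t : ℝ => w (u₀ + t • (Pi.single q 1 : Fin n → ℝ)) i) 0 0) ∧
    (jacobianActive n A s)ᵀ = jacobianActive n A s ∧
    jacobianActive n A s * jacobianActive n A s = jacobianActive n A s ∧
    (jacobianActive n A s).rank = A.card - 1 := by
  have hdot : ((fun i : A => s i) ⬝ᵥ fun i : A => s i) ≠ 0 := by
    rw [dotProduct_restrict_self_of_sign hs]
    exact_mod_cast hA.card_pos.ne'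
  rw [jacobianActive_eq_projOntoOrth hs]
  refine ⟨fun i hi q hq => hasDerivAt_line_of_kkt hs hstat hbind u₀ hi hq,
    fun i hi q => ?_, transpose_projOntoOrth _, isIdempotentElem_projOntoOrth _, ?_⟩
  · simpa only [hzero _ i hi] using hasDerivAt_const (0 : ℝ) (0 : ℝ)
  · rw [rank_projOntoOrth hdot, Fintype.card_coe]

/-- Sensitivity of the ℓ1-ball projection with respect to the data `w̃`:
with the active set `𝒜` and signs `s` held fixed, if `w(u)` and `ν(u)` satisfy
the KKT stationarity `w(u)_i = u_i − ν(u)·s_i` on `𝒜`, vanish off `𝒜`, and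
satisfy the binding constraint `∑_{i∈𝒜} s_i w(u)_i = λ`, then for `i, q ∈ 𝒜`,
`∂w_i/∂w̃_q = 𝟙[i = q] − s_q s_i/|𝒜|`, and `∂w_i/∂w̃_q = 0` for `i ∉ 𝒜`.
Moreover the Jacobian restricted to `𝒜`, namely `I − s sᵀ/|𝒜|`, is symmetric,
idempotent, and has rank `|𝒜| − 1`. -/
theorem stmt_17 (n : ℕ) (A : Finset (Fin n)) (hA : A.Nonempty)
    (s : Fin n → ℝ) (hs : ∀ i ∈ A, s i = 1 ∨ s i = -1) (lam : ℝ)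
    (w : (Fin n → ℝ) → Fin n → ℝ) (ν : (Fin n → ℝ) → ℝ)
    (hstat : ∀ u : Fin n → ℝ, ∀ i ∈ A, w u i = u i - ν u * s i)
    (hzero : ∀ u : Fin n → ℝ, ∀ i ∉ A, w u i = 0)
    (hbind : ∀ u : Fin n → ℝ, (∑ i ∈ A, s i * w u i) = lam)
    (u₀ : Fin n → ℝ) (hν : 0 < ν u₀) :
    (∀ i ∈ A, ∀ q ∈ A,
      HasDerivAt (fun t : ℝ => w (u₀ + t • (Pi.single q 1 : Fin n → ℝ)) i)
        ((if i = q then (1 : ℝ) else 0) - s q * s i / (A.card : ℝ)) 0) ∧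
    (∀ i ∉ A, ∀ q : Fin n,
      HasDerivAt (fun t : ℝ => w (u₀ + t • (Pi.single q 1 : Fin n → ℝ)) i) 0 0) ∧
    (jacobianActive n A s)ᵀ = jacobianActive n A s ∧
    jacobianActive n A s * jacobianActive n A s = jacobianActive n A s ∧
    (jacobianActive n A s).rank = A.card - 1 :=
  stmt_17_general n A hA s hs lam w ν hstat hzero hbind u₀
end
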